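/- arXiv:1705.10476 — 3 statements merged into one kernel-verified Lean document; each statement's English description precedes it below -/
import Mathlib

section
/- If G is a finite non-nilpotent group and every maximal chain of G of length 2 contains a proper subgroup of G that is subnormal in G, then G is a Schmidt group all of whose Sylow subgroups are abelian. (Corollary 1.5) -/
/-- `A` is subnormal in `G`: there is a chain `A = A₀ ⊴ A₁ ⊴ ⋯ ⊴ Aₙ = G`
with each term normal in the next. -/
def SubnormalIn {G : Type*} [Group G] (A : Subgroup G) : Prop :=
  ∃ (n : ℕ) (c : ℕ → Subgroup G), c 0 = A ∧ c n = ⊤ ∧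
    ∀ i < n, c i ≤ c (i + 1) ∧ ((c i).subgroupOf (c (i + 1))).Normal

/-- A Schmidt group: a non-nilpotent group all of whose proper subgroups are nilpotent. -/
def IsSchmidtGroup (G : Type*) [Group G] : Prop :=
  ¬ Group.IsNilpotent G ∧ ∀ H : Subgroup G, H < ⊤ → Group.IsNilpotent H

/-- `T` is a maximal subgroup of the subgroup `M` (of some ambient group). -/
def IsMaximalSubgroupOf {G : Type*} [Group G] (T M : Subgroup G) : Prop :=
  T < M ∧ ∀ L : Subgroup G, T < L → L ≤ M → L = M

/-- All Sylow subgroups of `G` are abelian. -/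
def AllSylowAbelian (G : Type*) [Group G] : Prop :=
  ∀ p : ℕ, p.Prime → ∀ P : Sylow p G, ∀ x y : (P : Subgroup G), x * y = y * x

/-!
A maximal subgroup `M` that is not normal is not subnormal either, so by hypothesis every maximal
subgroup `T` of `M` is subnormal in `G`. The next term of a subnormal series from `T` normalises
`T`, and the normaliser of `T` is `M`; since `M` is not subnormal, `T` must be normal in `G`. Two
distinct maximal subgroups of `M` would then generate the non-normal `M`, so `M` has a unique
maximal subgroup `T`. Hence `M` is cyclic, generated by any element outside `T`, and an `r`-group,
since otherwise all its Sylow subgroups would lie in `T`.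

By Frattini's argument the normaliser of a Sylow subgroup lies in no normal maximal subgroup, so
the normaliser of a non-normal Sylow `p`-subgroup `P` lies in a maximal subgroup of the kind
above; this is an `r`-group containing `P`, hence equal to `P`. A Sylow subgroup of a normal maximal subgroup
`C` therefore lies in a normal Sylow subgroup of `G`, or in the unique maximal subgroup of a
non-normal one, and either is a normal `p`-subgroup of `G`; so `C` is nilpotent. A normal Sylow
`p`-subgroup `P` meets a non-normal maximal `q`-subgroup `M` trivially (for `p = q` we would get
`M ≤ P`), so `⁅P, P⁆ ⊔ M` is `M` or `G`, and in both cases `⁅P, P⁆ = ⊥`.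
-/

section

variable {G : Type*} [Group G]

theorem SubnormalIn.isSubnormal {A : Subgroup G} (h : SubnormalIn A) : A.IsSubnormal := by
  obtain ⟨n, c, rfl, hn, hc⟩ := h
  induction n generalizing c with
  | zero => exact hn ▸ .top
  | succ n ih =>
    exact .step _ _ (hc 0 n.succ_pos).1
      (ih (fun i => c (i + 1)) hn fun i hi => hc (i + 1) (by omega)) (hc 0 n.succ_pos).2

namespace Subgroup

theorem IsSubnormal.normal_of_isCoatom {M : Subgroup G} (hs : M.IsSubnormal)
    (hM : IsCoatom M) : M.Normal := by
  obtain h | ⟨K, hK, hMK, hKtop⟩ := hs.lt_normal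
  · exact absurd h hM.1
  · rwa [← (hM.le_iff.mp hMK).resolve_left hKtop.ne]

theorem IsSubnormal.exists_lt_le_normalizer {H : Subgroup G} (hs : H.IsSubnormal)
    (hn : ¬ H.Normal) : ∃ K, H < K ∧ K.IsSubnormal ∧ K ≤ normalizer H := by
  obtain rfl | ⟨K, hHK, hK, hHn⟩ := IsSubnormal.iff_eq_top_or_exists.mp hs
  · exact absurd normal_top hn
  · exact ⟨K, hHK, hK, (normal_subgroupOf_iff_le_normalizer hHK.le).mp hHn⟩

theorem isMaximalSubgroupOf_map_subtype {M : Subgroup G} {T : Subgroup M} (hT : IsCoatom T) :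
    IsMaximalSubgroupOf (T.map M.subtype) M := by
  refine ⟨?_, fun L hTL hLM => ?_⟩
  · simpa [← map_subtype_lt_map_subtype (G' := M), ← MonoidHom.range_eq_map] using hT.lt_top
  · have : T < L.subgroupOf M := by
      rwa [← map_subtype_lt_map_subtype, subgroupOf_map_subtype, inf_of_le_left hLM]
    exact hLM.antisymm (subgroupOf_eq_top.mp (hT.2 _ this))

theorem eq_top_of_forall_sylow_le [Finite G] {H : Subgroup G}
    (h : ∀ (p : ℕ) [Fact p.Prime] (P : Sylow p G), (P : Subgroup G) ≤ H) : H = ⊤ := by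
  refine eq_top_of_card_eq H (Nat.dvd_antisymm (card_subgroup_dvd_card H) ?_)
  refine (Nat.factorization_prime_le_iff_dvd Nat.card_pos.ne' Nat.card_pos.ne').mp fun p hp => ?_
  have : Fact p.Prime := ⟨hp⟩
  obtain ⟨P⟩ := (inferInstance : Nonempty (Sylow p G))
  rw [← hp.pow_dvd_iff_le_factorization Nat.card_pos.ne', ← P.card_eq_multiplicity]
  exact card_dvd_of_le (h p P)

end Subgroup

section UniqueCoatom

variable {X : Type*} [Group X] {T : Subgroup X}

theorem isCyclic_of_forall_le (hT : T ≠ ⊤) (h : ∀ H : Subgroup X, H ≠ ⊤ → H ≤ T) :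
    IsCyclic X := by
  obtain ⟨x, -, hx⟩ := SetLike.exists_of_lt hT.lt_top
  exact isCyclic_iff_exists_zpowers_eq_top.mpr
    ⟨x, by_contra fun hne => hx (h _ hne (Subgroup.mem_zpowers x))⟩

theorem exists_isPGroup_of_forall_le [Finite X] (hT : T ≠ ⊤)
    (h : ∀ H : Subgroup X, H ≠ ⊤ → H ≤ T) : ∃ p, p.Prime ∧ IsPGroup p X := by
  by_contra! hX
  refine hT (Subgroup.eq_top_of_forall_sylow_le fun p hp P => h _ fun hP => ?_)
  exact hX p hp.out (IsPGroup.of_equiv P.isPGroup' (hP ▸ Subgroup.topEquiv))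

end UniqueCoatom

theorem Sylow.normal_of_map_subtype_le {p : ℕ} [Fact p.Prime] {H N : Subgroup G} [N.Normal]
    (hN : IsPGroup p N) (R : Sylow p H) (hR : (R : Subgroup H).map H.subtype ≤ N) :
    (R : Subgroup H).Normal := by
  rw [← R.3 (hN.comap_of_injective _ H.subtype_injective) (Subgroup.map_le_iff_le_comap.mp hR)]
  exact Subgroup.normal_subgroupOf

open scoped Pointwise in
theorem Subgroup.le_of_sup_eq_top_of_disjoint {D N M : Subgroup G} [D.Normal] (hDN : D ≤ N)
    (hDM : D ⊔ M = ⊤) (hNM : Disjoint N M) : N ≤ D := by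
  intro x hx
  have : x ∈ (D : Set G) * (M : Set G) := by rw [← Subgroup.normal_mul, hDM]; trivial
  obtain ⟨d, hd, m, hm, rfl⟩ := this
  dsimp only at hx ⊢
  have hmN : m ∈ N := by simpa using N.mul_mem (N.inv_mem (hDN hd)) hx
  rwa [Subgroup.disjoint_def.mp hNM hmN hm, mul_one]

theorem Subgroup.commutator_eq_bot_of_disjoint_isCoatom {N M : Subgroup G} [N.Normal]
    [Group.IsSolvable N] (hM : IsCoatom M) (hNM : Disjoint N M) : ⁅N, N⁆ = ⊥ := by
  by_contra hD
  have hN : N ≠ ⊥ := fun h => hD (by rw [h, Subgroup.commutator_bot_left])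
  have hlt : ⁅N, N⁆ < N := by
    have : Nontrivial N := (N.nontrivial_iff_ne_bot).mpr hN
    rw [← N.range_subtype, MonoidHom.range_eq_map, ← Subgroup.map_commutator,
      Subgroup.map_subtype_lt_map_subtype]
    exact Group.IsSolvable.commutator_lt_top_of_nontrivial N
  obtain hDM | hDM := hM.le_iff.mp (le_sup_right : M ≤ ⁅N, N⁆ ⊔ M)
  · exact hlt.not_ge (le_of_sup_eq_top_of_disjoint hlt.le hDM hNM)
  · exact hD (hNM.mono_left hlt.le |>.eq_bot_of_le (hDM ▸ le_sup_left))

theorem exists_isCoatom_not_normal [Finite G] (hnn : ¬ Group.IsNilpotent G) :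
    ∃ M : Subgroup G, IsCoatom M ∧ ¬ M.Normal := by
  by_contra! hM
  exact hnn ((Group.isNilpotent_of_finite_tfae.out 0 2).mpr hM)

def MaxChainSubnormal (G : Type*) [Group G] : Prop :=
  ∀ M₁ M₂ : Subgroup G, IsCoatom M₁ → IsMaximalSubgroupOf M₂ M₁ →
    M₁.IsSubnormal ∨ M₂.IsSubnormal

namespace MaxChainSubnormal

open Subgroup

variable {M : Subgroup G}

theorem normal_map_subtype (h : MaxChainSubnormal G) (hM : IsCoatom M) (hMn : ¬ M.Normal)
    {T : Subgroup M} (hT : IsCoatom T) : (T.map M.subtype).Normal := by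
  have hmax := isMaximalSubgroupOf_map_subtype hT
  have hs : (T.map M.subtype).IsSubnormal :=
    (h M _ hM hmax).resolve_left fun hs => hMn (hs.normal_of_isCoatom hM)
  have hMN : M ≤ normalizer (T.map M.subtype) := by
    have hT' : (T.map M.subtype).subgroupOf M = T :=
      comap_map_eq_self_of_injective M.subtype_injective T
    rw [← normal_subgroupOf_iff_le_normalizer hmax.1.le, hT']
    exact (hT' ▸ hs.subgroupOf).normal_of_isCoatom hT
  by_contra hn
  obtain ⟨K, hTK, hK, hKN⟩ := hs.exists_lt_le_normalizer hn
  have hNM := (hM.le_iff.mp hMN).resolve_left (mt normalizer_eq_top_iff.mp hn)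
  exact hMn ((hmax.2 K hTK (hNM ▸ hKN) ▸ hK).normal_of_isCoatom hM)

theorem exists_isCoatom_forall_le [Finite G] (h : MaxChainSubnormal G) (hM : IsCoatom M)
    (hMn : ¬ M.Normal) :
    ∃ T : Subgroup M, IsCoatom T ∧ (T.map M.subtype).Normal ∧
      ∀ H : Subgroup M, H ≠ ⊤ → H ≤ T := by
  have hbot : (⊥ : Subgroup M) ≠ ⊤ := fun hb => hMn <| by
    rw [← M.range_subtype, MonoidHom.range_eq_map, ← hb, Subgroup.map_bot]
    exact normal_bot
  obtain ⟨T, hT, -⟩ := (eq_top_or_exists_le_coatom ⊥).resolve_left hbot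
  refine ⟨T, hT, h.normal_map_subtype hM hMn hT, fun H hH => ?_⟩
  obtain ⟨S, hS, hHS⟩ := (eq_top_or_exists_le_coatom H).resolve_left hH
  suffices S = T from this ▸ hHS
  by_contra hST
  have := h.normal_map_subtype hM hMn hS
  have := h.normal_map_subtype hM hMn hT
  refine hMn ?_
  rw [← M.range_subtype, MonoidHom.range_eq_map, ← hS.sup_eq_top_of_ne hT hST, Subgroup.map_sup]
  exact sup_normal _ _

variable [Finite G]

theorem isCyclic (h : MaxChainSubnormal G) (hM : IsCoatom M) (hMn : ¬ M.Normal) : IsCyclic M :=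
  have ⟨_, hT, _, hle⟩ := h.exists_isCoatom_forall_le hM hMn
  isCyclic_of_forall_le hT.1 hle

theorem exists_isPGroup (h : MaxChainSubnormal G) (hM : IsCoatom M) (hMn : ¬ M.Normal) :
    ∃ p, p.Prime ∧ IsPGroup p M :=
  have ⟨_, hT, _, hle⟩ := h.exists_isCoatom_forall_le hM hMn
  exists_isPGroup_of_forall_le hT.1 hle

theorem exists_normal_isPGroup_forall_le (h : MaxChainSubnormal G) {p : ℕ} (hM : IsCoatom M)
    (hMn : ¬ M.Normal) (hMp : IsPGroup p M) :
    ∃ N : Subgroup G, N.Normal ∧ IsPGroup p N ∧ ∀ H ≤ M, H ≠ M → H ≤ N := by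
  obtain ⟨T, -, hTn, hle⟩ := h.exists_isCoatom_forall_le hM hMn
  refine ⟨_, hTn, hMp.to_le (map_subtype_le T), fun H hHM hne => ?_⟩
  rw [← map_subgroupOf_eq_of_le hHM]
  exact map_mono (hle _ (mt subgroupOf_eq_top.mp fun hMH => hne (hHM.antisymm hMH)))

theorem isCoatom_sylow (h : MaxChainSubnormal G) {p : ℕ} [Fact p.Prime] (P : Sylow p G)
    (hP : ¬ (P : Subgroup G).Normal) : IsCoatom (P : Subgroup G) := by
  obtain ⟨C, hC, hNC⟩ := (eq_top_or_exists_le_coatom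
    (normalizer ((P : Subgroup G) : Set G))).resolve_left (mt normalizer_eq_top_iff.mp hP)
  have hPC : (P : Subgroup G) ≤ C := le_normalizer.trans hNC
  by_cases hCn : C.Normal
  · exact absurd (top_le_iff.mp (Sylow.normalizer_sup_eq_top' P hPC ▸ sup_le hNC le_rfl)) hC.1
  obtain ⟨r, hr, hCr⟩ := h.exists_isPGroup hC hCn
  have : Fact r.Prime := ⟨hr⟩
  obtain rfl | hrp := eq_or_ne r p
  · exact P.3 hCr hPC ▸ hC
  · have := disjoint_self.mp (IsPGroup.disjoint_of_ne r p hrp _ _ (hCr.to_le hPC) P.2)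
    exact absurd (this ▸ normal_bot) hP

theorem isNilpotent_of_isCoatom_of_normal (h : MaxChainSubnormal G) {C : Subgroup G}
    (hC : IsCoatom C) (hCn : C.Normal) : Group.IsNilpotent C := by
  refine (Group.isNilpotent_of_finite_tfae.out 0 3).mpr ?_
  intro r _ R
  obtain ⟨P, hRP⟩ := (R.isPGroup'.map C.subtype).exists_le_sylow
  by_cases hPn : (P : Subgroup G).Normal
  · exact Sylow.normal_of_map_subtype_le P.isPGroup' R hRP
  have hP := h.isCoatom_sylow P hPn
  obtain ⟨N, hN, hNr, hle⟩ := h.exists_normal_isPGroup_forall_le hP hPn P.isPGroup'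
  refine Sylow.normal_of_map_subtype_le hNr R ((le_inf hRP (map_subtype_le _)).trans
    (hle _ inf_le_left fun hPC => hPn ?_))
  exact (hP.le_iff.mp (inf_eq_left.mp hPC)).resolve_left hC.1 ▸ hCn

theorem isNilpotent_of_isCoatom (h : MaxChainSubnormal G) {C : Subgroup G} (hC : IsCoatom C) :
    Group.IsNilpotent C := by
  by_cases hCn : C.Normal
  · exact h.isNilpotent_of_isCoatom_of_normal hC hCn
  · let _ := (h.isCyclic hC hCn).commGroup
    infer_instance

theorem isSchmidtGroup (h : MaxChainSubnormal G) (hnn : ¬ Group.IsNilpotent G) :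
    IsSchmidtGroup G := by
  refine ⟨hnn, fun H hH => ?_⟩
  obtain ⟨C, hC, hHC⟩ := (eq_top_or_exists_le_coatom H).resolve_left hH.ne
  have := h.isNilpotent_of_isCoatom hC
  exact Group.nilpotent_of_mulEquiv (subgroupOfEquivOfLe hHC)

theorem isMulCommutative_sylow (h : MaxChainSubnormal G) (hnn : ¬ Group.IsNilpotent G)
    {p : ℕ} [Fact p.Prime] (P : Sylow p G) : IsMulCommutative (P : Subgroup G) := by
  by_cases hPn : (P : Subgroup G).Normal
  · obtain ⟨M, hM, hMn⟩ := exists_isCoatom_not_normal hnn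
    obtain ⟨q, hq, hMq⟩ := h.exists_isPGroup hM hMn
    have : Fact q.Prime := ⟨hq⟩
    have hpq : p ≠ q := by
      rintro rfl
      have hMP : M ≤ P := le_sup_right.trans (P.3 (P.2.to_sup_of_normal_left hMq) le_sup_left).le
      obtain hP | hP := hM.le_iff.mp hMP
      · exact hnn (IsPGroup.of_equiv P.isPGroup' (hP ▸ topEquiv)).isNilpotent
      · exact hMn (hP ▸ hPn)
    have := P.isPGroup'.isNilpotent
    exact commutator_self_eq_bot_iff.mp
      (commutator_eq_bot_of_disjoint_isCoatom hM (IsPGroup.disjoint_of_ne p q hpq _ _ P.2 hMq))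
  · let _ := (h.isCyclic (h.isCoatom_sylow P hPn) hPn).commGroup
    infer_instance

theorem allSylowAbelian (h : MaxChainSubnormal G) (hnn : ¬ Group.IsNilpotent G) :
    AllSylowAbelian G := fun p hp P x y =>
  have : Fact p.Prime := ⟨hp⟩
  (h.isMulCommutative_sylow hnn P).is_comm.comm x y

end MaxChainSubnormal

end

/-- Corollary 1.5: if `G` is non-nilpotent and every maximal chain `M₂ < M₁ < G` of
length 2 contains a proper subnormal subgroup of `G`, then `G` is a Schmidt group
with abelian Sylow subgroups. -/
theorem corollary1_5 (G : Type*) [Group G] [Finite G] (hnn : ¬ Group.IsNilpotent G)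
    (hchain : ∀ M₁ M₂ : Subgroup G, IsCoatom M₁ → IsMaximalSubgroupOf M₂ M₁ →
      SubnormalIn M₁ ∨ SubnormalIn M₂) :
    IsSchmidtGroup G ∧ AllSylowAbelian G := by
  have h : MaxChainSubnormal G := fun M₁ M₂ h₁ h₂ =>
    (hchain M₁ M₂ h₁ h₂).imp SubnormalIn.isSubnormal SubnormalIn.isSubnormal
  exact ⟨h.isSchmidtGroup hnn, h.allSylowAbelian hnn⟩
end

section
/- Let 𝔉 be a hereditary K-lattice saturated formation of finite groups containing all nilpotent groups, and let G be a finite group. If A ∈ 𝔉 and B ∈ 𝔉 are K-𝔉-subnormal subgroups of G, then the subgroup ⟨A, B⟩ generated by A and B belongs to 𝔉. (Lemma 2.4(ii)) -/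
/-- A class of finite groups: a property of finite groups (in `Type 0`). -/
def GroupClass : Type 1 := ∀ (G : Type) [Group G] [Finite G], Prop

/-- `𝔉` is closed under isomorphism. -/
def GroupClass.IsIsoClosed (𝔉 : GroupClass) : Prop :=
  ∀ (G : Type) [Group G] [Finite G] (H : Type) [Group H] [Finite H],
    Nonempty (G ≃* H) → 𝔉 G → 𝔉 H

/-- `𝔉` is a formation: it contains the trivial group, is closed under isomorphism,
is closed under quotients, and `G/(N₁ ⊓ N₂) ∈ 𝔉` whenever `G/N₁, G/N₂ ∈ 𝔉`. -/
def GroupClass.IsFormation (𝔉 : GroupClass) : Prop :=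
  (∀ (G : Type) [Group G] [Finite G], Subsingleton G → 𝔉 G) ∧
  𝔉.IsIsoClosed ∧
  (∀ (G : Type) [Group G] [Finite G] (N : Subgroup G) [N.Normal], 𝔉 G → 𝔉 (G ⧸ N)) ∧
  (∀ (G : Type) [Group G] [Finite G] (N₁ N₂ : Subgroup G) (h₁ : N₁.Normal) (h₂ : N₂.Normal),
    𝔉 (G ⧸ N₁) → 𝔉 (G ⧸ N₂) →
      (haveI : (N₁ ⊓ N₂).Normal := @Subgroup.normal_inf_normal _ _ N₁ N₂ h₁ h₂
       𝔉 (G ⧸ (N₁ ⊓ N₂))))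

/-- `𝔉` is saturated: `G ∈ 𝔉` whenever `G/Φ(G) ∈ 𝔉`, where `Φ(G)` is the Frattini subgroup. -/
def GroupClass.IsSaturated (𝔉 : GroupClass) : Prop :=
  ∀ (G : Type) [Group G] [Finite G], 𝔉 (G ⧸ frattini G) → 𝔉 G

/-- `𝔉` is hereditary: closed under taking subgroups. -/
def GroupClass.IsHereditary (𝔉 : GroupClass) : Prop :=
  ∀ (G : Type) [Group G] [Finite G] (H : Subgroup G), 𝔉 G → 𝔉 H

/-- `𝔉` contains all (finite) nilpotent groups. -/
def GroupClass.ContainsNilpotent (𝔉 : GroupClass) : Prop :=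
  ∀ (G : Type) [Group G] [Finite G], Group.IsNilpotent G → 𝔉 G

/-- A subgroup `A` of `G` is `K`-`𝔉`-subnormal in `G` if there is a chain
`A = A₀ ≤ A₁ ≤ ⋯ ≤ Aₙ = G` such that for each `i`, either `Aᵢ` is normal in `Aᵢ₊₁`
or `Aᵢ₊₁/(Aᵢ)_{Aᵢ₊₁} ∈ 𝔉`, where `(Aᵢ)_{Aᵢ₊₁}` is the normal core of `Aᵢ` in `Aᵢ₊₁`. -/
def KFSubnormal (𝔉 : GroupClass) {G : Type} [Group G] [Finite G] (A : Subgroup G) : Prop :=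
  ∃ (n : ℕ) (c : ℕ → Subgroup G), c 0 = A ∧ c n = ⊤ ∧
    ∀ i < n, c i ≤ c (i + 1) ∧
      (((c i).subgroupOf (c (i + 1))).Normal ∨
        𝔉 ((c (i + 1)) ⧸ ((c i).subgroupOf (c (i + 1))).normalCore))

/-- `𝔉` is a `K`-lattice formation: in every finite group the set of `K`-`𝔉`-subnormal
subgroups is closed under intersections and joins (i.e. it is a sublattice of the
lattice of all subgroups). -/
def GroupClass.IsKLattice (𝔉 : GroupClass) : Prop :=
  ∀ (G : Type) [Group G] [Finite G] (A B : Subgroup G),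
    KFSubnormal 𝔉 A → KFSubnormal 𝔉 B →
      KFSubnormal 𝔉 (A ⊓ B) ∧ KFSubnormal 𝔉 (A ⊔ B)

/-!
Take a counterexample `G = ⟨A, B⟩` of least order; then `A` and `B` are proper and nontrivial.
Every proper quotient of `G` is generated by the images of `A` and `B`, so it lies in `𝔉`;
since `𝔉` is a formation, `G` has a unique minimal normal subgroup `M`, and since `𝔉` is
saturated, `M ⊄ Φ(G)`, so `G = ML` for a proper subgroup `L`. For a proper K-`𝔉`-subnormal
`U ≠ 1`, the last proper term of a chain from `U` to `G` is either normal or has a nontrivial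
core, so it contains `M`: thus `MU ≠ G`. Minimality gives `M ∈ 𝔉`: the normal closure `Q` of
`A` in `MA` lies in `𝔉`, and either `M ∩ Q = 1`, so that `A` centralizes `M` and `M` is
abelian, or `M` is generated by the `G`-conjugates of the `M`-invariant `𝔉`-subgroup `M ∩ Q`.
Hence `MA, MB ∈ 𝔉`, so `L ∩ MA` and `L ∩ MB` are K-`𝔉`-subnormal, and so is their join
`U ≤ L`. But `MU ≥ AB = G` by Dedekind's law, a contradiction.
-/

open scoped Pointwise

namespace GroupClass.IsFormation

variable {𝔉 : GroupClass} {G : Type} [Group G] [Finite G] {H : Type} [Group H] [Finite H]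

theorem of_mulEquiv (h𝔉 : 𝔉.IsFormation) (e : G ≃* H) (hG : 𝔉 G) : 𝔉 H :=
  h𝔉.2.1 G H ⟨e⟩ hG

theorem of_surjective (h𝔉 : 𝔉.IsFormation) (f : G →* H) (hf : Function.Surjective f)
    (hG : 𝔉 G) : 𝔉 H :=
  h𝔉.of_mulEquiv (QuotientGroup.quotientKerEquivOfSurjective f hf) (h𝔉.2.2.1 G f.ker hG)

theorem quotient_map (h𝔉 : 𝔉.IsFormation) (f : G →* H) (hf : Function.Surjective f)
    {N : Subgroup G} [N.Normal] {N' : Subgroup H} [N'.Normal] (hN : N ≤ N'.comap f)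
    (hG : 𝔉 (G ⧸ N)) : 𝔉 (H ⧸ N') :=
  h𝔉.of_surjective (QuotientGroup.map N N' f hN)
    (QuotientGroup.map_surjective_of_surjective _ _ f
      ((QuotientGroup.mk'_surjective N').comp hf) hN) hG

theorem ne_bot_of_quotient (h𝔉 : 𝔉.IsFormation) (hG : ¬ 𝔉 G) {N : Subgroup G} [N.Normal]
    (hN : 𝔉 (G ⧸ N)) : N ≠ ⊥ := by
  rintro rfl
  exact hG (h𝔉.of_mulEquiv QuotientGroup.quotientBot hN)

theorem map (h𝔉 : 𝔉.IsFormation) (f : G →* H) {A : Subgroup G} (hA : 𝔉 A) : 𝔉 (A.map f) :=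
  h𝔉.of_surjective (f.subgroupMap A) (f.subgroupMap_surjective A) hA

theorem subgroup_iff_of_eq_top (h𝔉 : 𝔉.IsFormation) {A : Subgroup G} (h : A = ⊤) :
    𝔉 A ↔ 𝔉 G :=
  let e := (MulEquiv.subgroupCongr h).trans Subgroup.topEquiv
  ⟨h𝔉.of_mulEquiv e, h𝔉.of_mulEquiv e.symm⟩

theorem subgroupOf_iff (h𝔉 : 𝔉.IsFormation) {A B : Subgroup G} (h : A ≤ B) :
    𝔉 (A.subgroupOf B) ↔ 𝔉 A :=
  let e := Subgroup.subgroupOfEquivOfLe h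
  ⟨h𝔉.of_mulEquiv e, h𝔉.of_mulEquiv e.symm⟩

theorem smul (h𝔉 : 𝔉.IsFormation) (g : ConjAct G) {A : Subgroup G} (hA : 𝔉 A) :
    𝔉 ↥(g • A) :=
  h𝔉.of_mulEquiv (Subgroup.equivSMul g A) hA

theorem of_le (h𝔉 : 𝔉.IsFormation) (hher : 𝔉.IsHereditary) {A B : Subgroup G} (h : B ≤ A)
    (hA : 𝔉 A) : 𝔉 B :=
  (h𝔉.subgroupOf_iff h).1 (hher A _ hA)

theorem quotient_normalCore_of_ker_le (h𝔉 : 𝔉.IsFormation) (hher : 𝔉.IsHereditary)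
    {S : Subgroup G} (ρ : G →* H) (hH : 𝔉 H) (hker : ρ.ker ≤ S) : 𝔉 (G ⧸ S.normalCore) :=
  h𝔉.quotient_map (MonoidHom.id G) Function.surjective_id
    (Subgroup.normal_le_normalCore.2 hker)
    (h𝔉.of_mulEquiv (QuotientGroup.quotientKerEquivRange ρ).symm (hher H ρ.range hH))

end GroupClass.IsFormation

namespace Subgroup

variable {G H : Type*} [Group G] [Group H]

theorem subgroupOf_map_subgroupMap (f : G →* H) {S T : Subgroup G} (h : S ≤ T) :
    (S.subgroupOf T).map (f.subgroupMap T) = (S.map f).subgroupOf (T.map f) := by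
  ext ⟨y, hy⟩
  simp only [mem_map, mem_subgroupOf, Subtype.exists, Subtype.ext_iff,
    MonoidHom.subgroupMap_apply_coe]
  exact ⟨fun ⟨x, _, hx, hxy⟩ => ⟨x, hx, hxy⟩, fun ⟨x, hx, hxy⟩ => ⟨x, h hx, hx, hxy⟩⟩

theorem map_normalCore_le (f : G →* H) (hf : Function.Surjective f) (S : Subgroup G) :
    S.normalCore.map f ≤ (S.map f).normalCore :=
  have := S.normalCore_normal.map f hf
  normal_le_normalCore.2 (map_mono S.normalCore_le)

theorem sup_inf_eq_of_sup_eq_top {M L Z : Subgroup G} [M.Normal] (hML : M ⊔ L = ⊤)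
    (hMZ : M ≤ Z) : M ⊔ L ⊓ Z = Z :=
  SetLike.coe_injective <| by
    rw [normal_mul, mul_inf_assoc _ _ _ hMZ, ← normal_mul, hML, coe_top, Set.univ_inter]

theorem exists_sup_eq_top_of_not_le_frattini {M : Subgroup G} (hM : ¬ M ≤ frattini G) :
    ∃ L : Subgroup G, L ≠ ⊤ ∧ M ⊔ L = ⊤ := by
  by_contra! h
  refine hM (le_iInf₂ fun L hL => ?_)
  rcases hL.le_iff.1 (le_sup_right : L ≤ M ⊔ L) with hML | hML
  · exact absurd hML (h L hL.1)
  · exact hML ▸ le_sup_left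

def normalClosureIn (H X : Subgroup G) : Subgroup G :=
  ⨆ x : X, ConjAct.toConjAct (x : G) • H

theorem le_normalClosureIn (H X : Subgroup G) : H ≤ normalClosureIn H X :=
  le_iSup_of_le 1 (by simp)

theorem normalClosureIn_le {H X Y : Subgroup G} (hHY : H ≤ Y)
    (hXY : X ≤ normalizer (Y : Set G)) : normalClosureIn H X ≤ Y :=
  iSup_le fun x => conjAct_pointwise_smul_eq_self (hXY x.2) ▸
    pointwise_smul_le_pointwise_smul_iff.2 hHY

theorem le_normalizer_normalClosureIn (H X : Subgroup G) :
    X ≤ normalizer (normalClosureIn H X : Set G) := by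
  have hle : ∀ x ∈ X, ConjAct.toConjAct x • normalClosureIn H X ≤ normalClosureIn H X := by
    intro x hx
    rw [pointwise_smul_subset_iff]
    refine iSup_le fun y => ?_
    rw [subset_pointwise_smul_iff, inv_inv, smul_smul, ← map_mul]
    exact le_iSup_of_le (⟨x, hx⟩ * y) le_rfl
  intro x hx
  refine conjAct_pointwise_smul_iff.1 (le_antisymm (hle x hx) ?_)
  rw [subset_pointwise_smul_iff, ← map_inv]
  exact hle _ (X.inv_mem hx)

end Subgroup

section KFSubnormal

variable {𝔉 : GroupClass} {G : Type} [Group G] [Finite G] {H : Type} [Group H] [Finite H]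

def KFNormal (𝔉 : GroupClass) {G : Type} [Group G] [Finite G] (S : Subgroup G) : Prop :=
  S.Normal ∨ 𝔉 (G ⧸ S.normalCore)

def KFStep (𝔉 : GroupClass) {G : Type} [Group G] [Finite G] (S T : Subgroup G) : Prop :=
  S ≤ T ∧ KFNormal 𝔉 (S.subgroupOf T)

theorem kfSubnormal_iff {A : Subgroup G} : KFSubnormal 𝔉 A ↔
    ∃ (n : ℕ) (c : ℕ → Subgroup G), c 0 = A ∧ c n = ⊤ ∧ ∀ i < n, KFStep 𝔉 (c i) (c (i + 1)) :=
  Iff.rfl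

namespace KFNormal

variable {S : Subgroup G}

theorem map (h𝔉 : 𝔉.IsFormation) (f : G →* H) (hf : Function.Surjective f)
    (h : KFNormal 𝔉 S) : KFNormal 𝔉 (S.map f) :=
  h.imp (fun hn => hn.map f hf) (h𝔉.quotient_map f hf
    (Subgroup.map_le_iff_le_comap.1 (Subgroup.map_normalCore_le f hf S)))

theorem comap (h𝔉 : 𝔉.IsFormation) (hher : 𝔉.IsHereditary) (f : H →* G)
    (h : KFNormal 𝔉 S) : KFNormal 𝔉 (S.comap f) := by
  refine h.imp (fun hn => hn.comap f) fun hF =>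
    h𝔉.quotient_normalCore_of_ker_le hher ((QuotientGroup.mk' _).comp f) hF ?_
  rw [← MonoidHom.comap_ker, QuotientGroup.ker_mk']
  exact Subgroup.comap_mono S.normalCore_le

theorem of_subgroupOf_top (h𝔉 : 𝔉.IsFormation) (h : KFNormal 𝔉 (S.subgroupOf ⊤)) :
    KFNormal 𝔉 S := by
  have hS : (S.subgroupOf ⊤).map (⊤ : Subgroup G).subtype = S := by
    rw [Subgroup.subgroupOf_map_subtype, inf_top_eq]
  exact hS ▸ h.map h𝔉 _ fun g => ⟨⟨g, trivial⟩, rfl⟩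

end KFNormal

namespace KFStep

variable {S T : Subgroup G}

theorem of_le_normalizer (h : S ≤ T) (hT : T ≤ Subgroup.normalizer (S : Set G)) :
    KFStep 𝔉 S T :=
  ⟨h, Or.inl ((Subgroup.normal_subgroupOf_iff_le_normalizer h).2 hT)⟩

theorem of_mem (h𝔉 : 𝔉.IsFormation) (h : S ≤ T) (hT : 𝔉 T) : KFStep 𝔉 S T :=
  ⟨h, Or.inr (h𝔉.2.2.1 _ _ hT)⟩

theorem map (h𝔉 : 𝔉.IsFormation) (f : G →* H) (h : KFStep 𝔉 S T) :
    KFStep 𝔉 (S.map f) (T.map f) :=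
  ⟨Subgroup.map_mono h.1, Subgroup.subgroupOf_map_subgroupMap f h.1 ▸
    h.2.map h𝔉 _ (f.subgroupMap_surjective T)⟩

theorem comap (h𝔉 : 𝔉.IsFormation) (hher : 𝔉.IsHereditary) (f : H →* G)
    (h : KFStep 𝔉 S T) : KFStep 𝔉 (S.comap f) (T.comap f) :=
  ⟨Subgroup.comap_mono h.1, h.2.comap h𝔉 hher (f.subgroupComap T)⟩

end KFStep

namespace KFSubnormal

variable {A : Subgroup G}

theorem top : KFSubnormal 𝔉 (⊤ : Subgroup G) :=
  ⟨0, fun _ => ⊤, rfl, rfl, fun _ hi => absurd hi (Nat.not_lt_zero _)⟩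

theorem of_kfStep {S T : Subgroup G} (h : KFStep 𝔉 S T) (hT : KFSubnormal 𝔉 T) :
    KFSubnormal 𝔉 S := by
  obtain ⟨n, c, h0, hn, hc⟩ := kfSubnormal_iff.1 hT
  refine kfSubnormal_iff.2 ⟨n + 1, fun | 0 => S | i + 1 => c i, rfl, hn, ?_⟩
  rintro (_ | i) hi
  · exact (h0 ▸ h : KFStep 𝔉 S (c 0))
  · exact hc i (Nat.lt_of_succ_lt_succ hi)

theorem of_normal (hA : A.Normal) : KFSubnormal 𝔉 A :=
  of_kfStep (.of_le_normalizer le_top (Subgroup.normalizer_eq_top_iff.2 hA).ge) top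

theorem map (h𝔉 : 𝔉.IsFormation) (f : G →* H) (hf : Function.Surjective f)
    (hA : KFSubnormal 𝔉 A) : KFSubnormal 𝔉 (A.map f) := by
  obtain ⟨n, c, h0, hn, hc⟩ := kfSubnormal_iff.1 hA
  refine kfSubnormal_iff.2 ⟨n, fun i => (c i).map f, congrArg _ h0, ?_,
    fun i hi => (hc i hi).map h𝔉 f⟩
  rw [← MonoidHom.range_eq_top.2 hf, MonoidHom.range_eq_map, ← hn]

theorem comap (h𝔉 : 𝔉.IsFormation) (hher : 𝔉.IsHereditary) (f : H →* G)
    (hA : KFSubnormal 𝔉 A) : KFSubnormal 𝔉 (A.comap f) := by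
  obtain ⟨n, c, h0, hn, hc⟩ := kfSubnormal_iff.1 hA
  exact kfSubnormal_iff.2 ⟨n, fun i => (c i).comap f, congrArg _ h0,
    (congrArg _ hn).trans (Subgroup.comap_top f), fun i hi => (hc i hi).comap h𝔉 hher f⟩

theorem conj (h𝔉 : 𝔉.IsFormation) (g : G) (hA : KFSubnormal 𝔉 A) :
    KFSubnormal 𝔉 (ConjAct.toConjAct g • A) :=
  hA.map h𝔉 (MulAut.conj g).toMonoidHom (MulAut.conj g).surjective

theorem exists_le_ne_top (h𝔉 : 𝔉.IsFormation) (hA : KFSubnormal 𝔉 A) (hAtop : A ≠ ⊤) :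
    ∃ S, A ≤ S ∧ S ≠ ⊤ ∧ KFNormal 𝔉 S := by
  classical
  obtain ⟨n, c, h0, hn, hc⟩ := kfSubnormal_iff.1 hA
  have hex : ∃ k, c k = ⊤ := ⟨n, hn⟩
  obtain ⟨j, hj⟩ : ∃ j, Nat.find hex = j + 1 :=
    Nat.exists_eq_succ_of_ne_zero fun hk => hAtop (h0 ▸ hk ▸ Nat.find_spec hex)
  have hjn : j < n := by have := Nat.find_min' hex hn; omega
  have hmono : ∀ i ≤ j, A ≤ c i := by
    intro i hi
    induction i with
    | zero => exact h0.ge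
    | succ i ih => exact (ih (by omega)).trans (hc i (by omega)).1
  have htop : c (j + 1) = ⊤ := hj ▸ Nat.find_spec hex
  refine ⟨c j, hmono j le_rfl, Nat.find_min hex (by omega), ?_⟩
  exact KFNormal.of_subgroupOf_top h𝔉 (htop ▸ (hc j hjn).2)

end KFSubnormal

end KFSubnormal

def KFJoinClosed (𝔉 : GroupClass) (G : Type) [Group G] [Finite G] : Prop :=
  ∀ A B : Subgroup G, KFSubnormal 𝔉 A → KFSubnormal 𝔉 B → 𝔉 A → 𝔉 B → 𝔉 ↥(A ⊔ B)

def KFJoinClosedBelow (𝔉 : GroupClass) (G : Type) [Group G] [Finite G] : Prop :=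
  ∀ (H : Type) [Group H] [Finite H], Nat.card H < Nat.card G → KFJoinClosed 𝔉 H

section MinimalCounterexample

variable {𝔉 : GroupClass} {G : Type} [Group G] [Finite G]

theorem sup_mem_of_sup_ne_top (h𝔉 : 𝔉.IsFormation) (hher : 𝔉.IsHereditary)
    (hind : KFJoinClosedBelow 𝔉 G) {A B : Subgroup G} (hA : KFSubnormal 𝔉 A)
    (hB : KFSubnormal 𝔉 B) (hAF : 𝔉 A) (hBF : 𝔉 B) (hAB : A ⊔ B ≠ ⊤) : 𝔉 ↥(A ⊔ B) := by
  have hcard : Nat.card ↥(A ⊔ B) < Nat.card G :=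
    (A ⊔ B).card_le_card_group.lt_of_ne fun h => hAB ((A ⊔ B).eq_top_of_card_eq h)
  have := hind _ hcard (A.subgroupOf (A ⊔ B)) (B.subgroupOf (A ⊔ B))
    (hA.comap h𝔉 hher _) (hB.comap h𝔉 hher _)
    ((h𝔉.subgroupOf_iff le_sup_left).2 hAF) ((h𝔉.subgroupOf_iff le_sup_right).2 hBF)
  exact (h𝔉.subgroup_iff_of_eq_top (Subgroup.codisjoint_subgroupOf_sup A B).eq_top).1 this

theorem iSup_mem_of_iSup_ne_top (h𝔉 : 𝔉.IsFormation) (hher : 𝔉.IsHereditary)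
    (hlat : 𝔉.IsKLattice) (hind : KFJoinClosedBelow 𝔉 G) {ι : Type*} [Finite ι]
    (f : ι → Subgroup G) (hf : ∀ i, KFSubnormal 𝔉 (f i)) (hfF : ∀ i, 𝔉 (f i))
    (htop : ⨆ i, f i ≠ ⊤) : 𝔉 ↥(⨆ i, f i) := by
  have := Fintype.ofFinite ι
  rw [← Finset.sup_univ_eq_iSup] at htop ⊢
  refine (Finset.sup_induction (p := fun K => K ≤ Finset.univ.sup f → KFSubnormal 𝔉 K ∧ 𝔉 K)
    (fun _ => ⟨.of_normal Subgroup.normal_bot, h𝔉.1 _ inferInstance⟩) ?_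
    (fun i _ _ => ⟨hf i, hfF i⟩) le_rfl).2
  intro K₁ h₁ K₂ h₂ hle
  obtain ⟨hK₁, hK₁F⟩ := h₁ (le_sup_left.trans hle)
  obtain ⟨hK₂, hK₂F⟩ := h₂ (le_sup_right.trans hle)
  exact ⟨(hlat G K₁ K₂ hK₁ hK₂).2,
    sup_mem_of_sup_ne_top h𝔉 hher hind hK₁ hK₂ hK₁F hK₂F (ne_top_of_le_ne_top htop hle)⟩

theorem quotient_mem_of_sup_eq_top (h𝔉 : 𝔉.IsFormation) (hind : KFJoinClosedBelow 𝔉 G)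
    {A B : Subgroup G} (hA : KFSubnormal 𝔉 A) (hB : KFSubnormal 𝔉 B) (hAF : 𝔉 A) (hBF : 𝔉 B)
    (hAB : A ⊔ B = ⊤) (N : Subgroup G) [N.Normal] (hN : N ≠ ⊥) : 𝔉 (G ⧸ N) := by
  have hcard : Nat.card (G ⧸ N) < Nat.card G := by
    rw [N.card_eq_card_quotient_mul_card_subgroup]
    exact lt_mul_of_one_lt_right Nat.card_pos ((Subgroup.one_lt_card_iff_ne_bot N).2 hN)
  have hπ := QuotientGroup.mk'_surjective N
  refine (h𝔉.subgroup_iff_of_eq_top ?_).1 (hind _ hcard _ _ (hA.map h𝔉 _ hπ)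
    (hB.map h𝔉 _ hπ) (h𝔉.map _ hAF) (h𝔉.map _ hBF))
  rw [← Subgroup.map_sup, hAB, ← MonoidHom.range_eq_map, MonoidHom.range_eq_top.2 hπ]

theorem exists_monolith (h𝔉 : 𝔉.IsFormation) (hG : ¬ 𝔉 G)
    (hq : ∀ (N : Subgroup G) [N.Normal], N ≠ ⊥ → 𝔉 (G ⧸ N)) :
    ∃ M : Subgroup G, M.Normal ∧ M ≠ ⊥ ∧ ∀ N : Subgroup G, N.Normal → N ≠ ⊥ → M ≤ N := by
  have : Nontrivial G := (subsingleton_or_nontrivial G).resolve_left fun h => hG (h𝔉.1 G h)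
  obtain ⟨M, hM⟩ := exists_minimal_of_wellFoundedLT (fun N : Subgroup G => N.Normal ∧ N ≠ ⊥)
    ⟨⊤, inferInstance, top_ne_bot⟩
  obtain ⟨hMn, hMb⟩ := hM.prop
  refine ⟨M, hMn, hMb, fun N hNn hNb => ?_⟩
  have hMN := h𝔉.2.2.2 G M N hMn hNn (hq M hMb) (hq N hNb)
  have := Subgroup.normal_inf_normal M N
  exact (hM.le_of_le ⟨this, h𝔉.ne_bot_of_quotient hG hMN⟩ inf_le_left).trans inf_le_right

theorem monolith_sup_ne_top (h𝔉 : 𝔉.IsFormation) (hG : ¬ 𝔉 G) {M : Subgroup G}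
    (hmin : ∀ N : Subgroup G, N.Normal → N ≠ ⊥ → M ≤ N) {U : Subgroup G}
    (hU : KFSubnormal 𝔉 U) (hUtop : U ≠ ⊤) (hUbot : U ≠ ⊥) : M ⊔ U ≠ ⊤ := by
  obtain ⟨S, hUS, hStop, hS⟩ := hU.exists_le_ne_top h𝔉 hUtop
  have hMS : M ≤ S := hS.elim (fun hn => hmin S hn (ne_bot_of_le_ne_bot hUbot hUS))
    fun hF => (hmin _ S.normalCore_normal (h𝔉.ne_bot_of_quotient hG hF)).trans S.normalCore_le
  exact ne_top_of_le_ne_top hStop (sup_le hMS hUS)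

theorem monolith_mem_of_commutator_eq_bot (hnil : 𝔉.ContainsNilpotent) {M : Subgroup G}
    [M.Normal] (hmin : ∀ N : Subgroup G, N.Normal → N ≠ ⊥ → M ≤ N) {A : Subgroup G}
    (hA : A ≠ ⊥) (hAM : ⁅A, M⁆ = ⊥) : 𝔉 M := by
  have hAC := Subgroup.commutator_eq_bot_iff_le_centralizer.1 hAM
  have hMC := hmin _ inferInstance (ne_bot_of_le_ne_bot hA hAC)
  have hcomm := Subgroup.commutator_self_eq_bot_iff.1
    (Subgroup.commutator_eq_bot_iff_le_centralizer.2 hMC)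
  exact hnil M (Subgroup.nilpotent_iff_lowerCentralSeries.2
    ⟨1, Subgroup.lowerCentralSeries_one_eq_bot_iff.2 hcomm⟩)

theorem monolith_mem_of_le_normalizer (h𝔉 : 𝔉.IsFormation) (hher : 𝔉.IsHereditary)
    (hlat : 𝔉.IsKLattice) (hind : KFJoinClosedBelow 𝔉 G) {M : Subgroup G} [M.Normal]
    (hMtop : M ≠ ⊤) (hmin : ∀ N : Subgroup G, N.Normal → N ≠ ⊥ → M ≤ N) {D : Subgroup G}
    (hDM : D ≤ M) (hD : D ≠ ⊥) (hMD : M ≤ Subgroup.normalizer (D : Set G)) (hDF : 𝔉 D) :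
    𝔉 M := by
  have hP : Subgroup.normalClosureIn D ⊤ = M := by
    refine le_antisymm
      (Subgroup.normalClosureIn_le hDM (Subgroup.normalizer_eq_top_iff.2 inferInstance).ge)
      (hmin _ ?_ (ne_bot_of_le_ne_bot hD (Subgroup.le_normalClosureIn D ⊤)))
    exact Subgroup.normalizer_eq_top_iff.1
      (top_unique (Subgroup.le_normalizer_normalClosureIn D ⊤))
  have hDsn : KFSubnormal 𝔉 D := .of_kfStep (.of_le_normalizer hDM hMD) (.of_normal inferInstance)
  rw [← hP] at hMtop ⊢
  exact iSup_mem_of_iSup_ne_top h𝔉 hher hlat hind _ (fun x => hDsn.conj h𝔉 (x : G))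
    (fun x => h𝔉.smul _ hDF) hMtop

theorem monolith_mem (h𝔉 : 𝔉.IsFormation) (hher : 𝔉.IsHereditary) (hlat : 𝔉.IsKLattice)
    (hnil : 𝔉.ContainsNilpotent) (hind : KFJoinClosedBelow 𝔉 G) {M : Subgroup G} [M.Normal]
    (hMtop : M ≠ ⊤) (hmin : ∀ N : Subgroup G, N.Normal → N ≠ ⊥ → M ≤ N) {A : Subgroup G}
    (hA : KFSubnormal 𝔉 A) (hAF : 𝔉 A) (hAbot : A ≠ ⊥) (hMA : M ⊔ A ≠ ⊤) : 𝔉 M := by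
  set Q := Subgroup.normalClosureIn A (M ⊔ A)
  have hQ : Q ≤ M ⊔ A := Subgroup.normalClosureIn_le le_sup_right Subgroup.le_normalizer
  have hQF : 𝔉 Q := iSup_mem_of_iSup_ne_top h𝔉 hher hlat hind _ (fun x => hA.conj h𝔉 (x : G))
    (fun x => h𝔉.smul _ hAF) (ne_top_of_le_ne_top hMA hQ)
  have hMQ : M ≤ Subgroup.normalizer (Q : Set G) :=
    le_sup_left.trans (Subgroup.le_normalizer_normalClosureIn A _)
  by_cases hD : M ⊓ Q = ⊥
  · refine monolith_mem_of_commutator_eq_bot hnil hmin hAbot (le_bot_iff.1 ?_)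
    calc ⁅A, M⁆ = ⁅M, A⁆ := Subgroup.commutator_comm A M
      _ ≤ ⁅M, Q⁆ := Subgroup.commutator_mono le_rfl (Subgroup.le_normalClosureIn A _)
      _ ≤ M ⊓ Q := le_inf (Subgroup.commutator_le_left M Q)
          (Subgroup.le_normalizer_iff_commutator_le_right.1 hMQ)
      _ = ⊥ := hD
  · exact monolith_mem_of_le_normalizer h𝔉 hher hlat hind hMtop hmin inf_le_left hD
      ((le_inf Subgroup.le_normalizer hMQ).trans Subgroup.inf_normalizer_le_normalizer_inf)
      (h𝔉.of_le hher inf_le_right hQF)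

theorem mem_of_sup_eq_top (h𝔉 : 𝔉.IsFormation) (hsat : 𝔉.IsSaturated)
    (hher : 𝔉.IsHereditary) (hlat : 𝔉.IsKLattice) (hnil : 𝔉.ContainsNilpotent)
    (hind : KFJoinClosedBelow 𝔉 G) {A B : Subgroup G} (hA : KFSubnormal 𝔉 A)
    (hB : KFSubnormal 𝔉 B) (hAF : 𝔉 A) (hBF : 𝔉 B) (hAB : A ⊔ B = ⊤) : 𝔉 G := by
  by_contra hG
  have hAtop : A ≠ ⊤ := fun h => hG ((h𝔉.subgroup_iff_of_eq_top h).1 hAF)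
  have hBtop : B ≠ ⊤ := fun h => hG ((h𝔉.subgroup_iff_of_eq_top h).1 hBF)
  have hAbot : A ≠ ⊥ := by rintro rfl; exact hBtop (bot_sup_eq B ▸ hAB)
  have hBbot : B ≠ ⊥ := by rintro rfl; exact hAtop (sup_bot_eq A ▸ hAB)
  have hq := quotient_mem_of_sup_eq_top h𝔉 hind hA hB hAF hBF hAB
  obtain ⟨M, hMn, hMbot, hmin⟩ := exists_monolith h𝔉 hG hq
  have hMA := monolith_sup_ne_top h𝔉 hG hmin hA hAtop hAbot
  have hMB := monolith_sup_ne_top h𝔉 hG hmin hB hBtop hBbot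
  have hMtop : M ≠ ⊤ := ne_top_of_le_ne_top hMA le_sup_left
  have hMF : 𝔉 M := monolith_mem h𝔉 hher hlat hnil hind hMtop hmin hA hAF hAbot hMA
  have hM : KFSubnormal 𝔉 M := .of_normal hMn
  obtain ⟨L, hLtop, hML⟩ := Subgroup.exists_sup_eq_top_of_not_le_frattini (M := M)
    fun h => hG (hsat G (hq _ (ne_bot_of_le_ne_bot hMbot h)))
  have hLM : ∀ C, KFSubnormal 𝔉 C → 𝔉 C → M ⊔ C ≠ ⊤ → KFSubnormal 𝔉 (L ⊓ (M ⊔ C)) :=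
    fun C hC hCF hMC => .of_kfStep
      (.of_mem h𝔉 inf_le_right (sup_mem_of_sup_ne_top h𝔉 hher hind hM hC hMF hCF hMC))
      (hlat G M C hM hC).2
  set U := L ⊓ (M ⊔ A) ⊔ L ⊓ (M ⊔ B)
  have hU : KFSubnormal 𝔉 U := (hlat G _ _ (hLM A hA hAF hMA) (hLM B hB hBF hMB)).2
  have hUtop : U ≠ ⊤ := ne_top_of_le_ne_top hLtop (sup_le inf_le_left inf_le_left)
  have hMU : M ⊔ U = ⊤ := by
    refine top_unique (hAB ▸ ?_)
    calc A ⊔ B ≤ (M ⊔ A) ⊔ (M ⊔ B) := sup_le_sup le_sup_right le_sup_right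
      _ = (M ⊔ L ⊓ (M ⊔ A)) ⊔ (M ⊔ L ⊓ (M ⊔ B)) := by
        rw [Subgroup.sup_inf_eq_of_sup_eq_top hML le_sup_left,
          Subgroup.sup_inf_eq_of_sup_eq_top hML le_sup_left]
      _ ≤ M ⊔ U := sup_le (sup_le_sup_left le_sup_left _) (sup_le_sup_left le_sup_right _)
  rcases eq_or_ne U ⊥ with hUbot | hUbot
  · exact hMtop (by rwa [hUbot, sup_bot_eq] at hMU)
  · exact monolith_sup_ne_top h𝔉 hG hmin hU hUtop hUbot hMU

end MinimalCounterexample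

theorem kfJoinClosed {𝔉 : GroupClass} (h𝔉 : 𝔉.IsFormation) (hsat : 𝔉.IsSaturated)
    (hher : 𝔉.IsHereditary) (hlat : 𝔉.IsKLattice) (hnil : 𝔉.ContainsNilpotent)
    (G : Type) [Group G] [Finite G] : KFJoinClosed 𝔉 G := by
  induction h : Nat.card G using Nat.strong_induction_on generalizing G with
  | _ n ih =>
  have hind : KFJoinClosedBelow 𝔉 G := fun H _ _ hH => ih _ (h ▸ hH) H rfl
  intro A B hA hB hAF hBF
  by_cases hAB : A ⊔ B = ⊤
  · exact (h𝔉.subgroup_iff_of_eq_top hAB).2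
      (mem_of_sup_eq_top h𝔉 hsat hher hlat hnil hind hA hB hAF hBF hAB)
  · exact sup_mem_of_sup_ne_top h𝔉 hher hind hA hB hAF hBF hAB

/-- Lemma 2.4(ii): let `𝔉` be a hereditary `K`-lattice saturated formation containing
all nilpotent groups. If `A, B ∈ 𝔉` are `K`-`𝔉`-subnormal subgroups of `G`, then
`⟨A, B⟩ ∈ 𝔉`. -/
theorem lemma2_4_ii (𝔉 : GroupClass) (hform : 𝔉.IsFormation) (hsat : 𝔉.IsSaturated)
    (hher : 𝔉.IsHereditary) (hlat : 𝔉.IsKLattice) (hnil : 𝔉.ContainsNilpotent)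
    (G : Type) [Group G] [Finite G] (A B : Subgroup G)
    (hA : KFSubnormal 𝔉 A) (hB : KFSubnormal 𝔉 B) (hAF : 𝔉 A) (hBF : 𝔉 B) :
    𝔉 (A ⊔ B : Subgroup G) :=
  kfJoinClosed hform hsat hher hlat hnil G A B hA hB hAF hBF
end

section
/- Let σ = {σ_i : i ∈ I} be a partition of the set of all primes. If a finite group G is σ-soluble, then for every i ∈ I the group G possesses a Hall σ_i-subgroup, i.e., a subgroup H that is a σ_i-group whose index in G is divisible by no prime in σ_i. (Lemma 2.5) -/
/-- A `π`-group: every prime dividing the order of `G` lies in `π`. -/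
def IsPiGroup (π : Set ℕ) (G : Type*) [Group G] : Prop :=
  ∀ p : ℕ, p.Prime → p ∣ Nat.card G → p ∈ π

/-- `σ` is a partition of the set of all primes: each block consists of primes and
every prime belongs to exactly one block. -/
def IsPrimePartition {ι : Type*} (σ : ι → Set ℕ) : Prop :=
  (∀ i, ∀ p ∈ σ i, p.Prime) ∧ ∀ p : ℕ, p.Prime → ∃! i, p ∈ σ i

/-- A σ-primary group: a `σ i`-group for some `i`. -/
def SigmaPrimary {ι : Type*} (σ : ι → Set ℕ) (G : Type*) [Group G] : Prop :=
  ∃ i, IsPiGroup (σ i) G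

/-- A σ-nilpotent group: an internal direct product of σ-primary groups, i.e. there are
normal σ-primary subgroups which are independent and generate the whole group. -/
def SigmaNilpotent {ι : Type*} (σ : ι → Set ℕ) (G : Type*) [Group G] : Prop :=
  ∃ (n : ℕ) (N : Fin n → Subgroup G),
    (∀ j, (N j).Normal) ∧ (∀ j, SigmaPrimary σ (N j)) ∧
    iSupIndep N ∧ (⨆ j, N j) = ⊤

/-- `(K, H)` is a chief factor of `G`: both are normal in `G`, `K < H`, and no normal
subgroup of `G` lies strictly between `K` and `H`. The factor group is `H/K`.
(Since `K` is normal in `G`, `K.subgroupOf H` is normal in `H`, hence equals its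
normal core in `H`, so `H ⧸ (K.subgroupOf H).normalCore` is the factor group `H/K`.) -/
def IsChiefFactor (G : Type*) [Group G] (K H : Subgroup G) : Prop :=
  K.Normal ∧ H.Normal ∧ K < H ∧
    ∀ L : Subgroup G, L.Normal → K ≤ L → L ≤ H → L = K ∨ L = H

/-- `G` is σ-soluble: every chief factor of `G` is σ-primary. -/
def SigmaSoluble {ι : Type*} (σ : ι → Set ℕ) (G : Type*) [Group G] : Prop :=
  ∀ K H : Subgroup G, IsChiefFactor G K H →
    SigmaPrimary σ (H ⧸ (K.subgroupOf H).normalCore)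

/-! Induction on `|G|`. A minimal normal subgroup `N` of `G` is a chief factor, hence a
`σ j`-group; as `σ` is a partition, `N` is then either a `σ i`-group or a `σ i'`-group. The
quotient `G/N` is again σ-soluble, so by induction it has a Hall `σ i`-subgroup `H/N`. In the
first case `H` is a Hall `σ i`-subgroup of `G`. In the second, `|N|` is coprime to `|H : N|`,
so by Schur–Zassenhaus `N` has a complement in `H`, and that complement is a Hall
`σ i`-subgroup of `G`. -/

def IsPiNumber (π : Set ℕ) (n : ℕ) : Prop :=
  ∀ p : ℕ, p.Prime → p ∣ n → p ∈ π

namespace IsPiNumber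

variable {π : Set ℕ} {a b : ℕ}

theorem one (π : Set ℕ) : IsPiNumber π 1 :=
  fun _ hp hp1 => absurd (Nat.dvd_one.mp hp1) hp.ne_one

theorem mul (ha : IsPiNumber π a) (hb : IsPiNumber π b) : IsPiNumber π (a * b) :=
  fun p hp hpab => (hp.dvd_mul.mp hpab).elim (ha p hp) (hb p hp)

theorem coprime_of_compl (ha : IsPiNumber π a) (hb : IsPiNumber πᶜ b) : a.Coprime b :=
  Nat.coprime_of_dvd fun p hp hpa hpb => hb p hp hpb (ha p hp hpa)

end IsPiNumber

theorem IsPrimePartition.isPiNumber_or_isPiNumber_compl {ι : Type*} {σ : ι → Set ℕ}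
    (hσ : IsPrimePartition σ) {j : ι} {n : ℕ} (hn : IsPiNumber (σ j) n) (i : ι) :
    IsPiNumber (σ i) n ∨ IsPiNumber (σ i)ᶜ n := by
  rcases eq_or_ne j i with rfl | hji
  · exact Or.inl hn
  · exact Or.inr fun p hp hpn hpi => hji ((hσ.2 p hp).unique (hn p hp hpn) hpi)

def IsHall (π : Set ℕ) {G : Type*} [Group G] (H : Subgroup G) : Prop :=
  IsPiNumber π (Nat.card H) ∧ IsPiNumber πᶜ H.index

section ChiefFactor

variable {G Q : Type*} [Group G] [Group Q]

theorem card_quotient_normalCore_subgroupOf (K H : Subgroup G) [K.Normal] :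
    Nat.card (H ⧸ (K.subgroupOf H).normalCore) = K.relIndex H := by
  rw [Subgroup.normalCore_eq_self]
  rfl

theorem sigmaSoluble_iff_relIndex {ι : Type*} (σ : ι → Set ℕ) :
    SigmaSoluble σ G ↔
      ∀ K H : Subgroup G, IsChiefFactor G K H → ∃ i, IsPiNumber (σ i) (K.relIndex H) := by
  unfold SigmaSoluble SigmaPrimary IsPiGroup
  refine forall₃_congr fun K H h => ?_
  have := h.1
  rw [card_quotient_normalCore_subgroupOf]
  rfl

theorem IsChiefFactor.comap {f : G →* Q} (hf : Function.Surjective f) {K H : Subgroup Q}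
    (h : IsChiefFactor Q K H) : IsChiefFactor G (K.comap f) (H.comap f) := by
  obtain ⟨hK, hH, hKH, hmin⟩ := h
  refine ⟨hK.comap f, hH.comap f, (Subgroup.comap_lt_comap_of_surjective hf).2 hKH, ?_⟩
  intro L hL hKL hLH
  have hLc : (L.map f).comap f = L :=
    Subgroup.comap_map_eq_self ((Subgroup.ker_le_comap f K).trans hKL)
  have hmap : ∀ M : Subgroup Q, (M.comap f).map f = M :=
    Subgroup.map_comap_eq_self_of_surjective hf
  rcases hmin (L.map f) (hL.map f hf) (hmap K ▸ Subgroup.map_mono hKL)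
      (hmap H ▸ Subgroup.map_mono hLH) with h | h
  · exact Or.inl (hLc ▸ congrArg (Subgroup.comap f) h)
  · exact Or.inr (hLc ▸ congrArg (Subgroup.comap f) h)

theorem SigmaSoluble.of_surjective {ι : Type*} {σ : ι → Set ℕ} (hG : SigmaSoluble σ G)
    {f : G →* Q} (hf : Function.Surjective f) : SigmaSoluble σ Q := by
  rw [sigmaSoluble_iff_relIndex] at hG ⊢
  intro K H h
  have := hG _ _ (h.comap hf)
  rwa [Subgroup.relIndex_comap, Subgroup.map_comap_eq_self_of_surjective hf] at this

theorem isChiefFactor_bot_of_minimal {N : Subgroup G}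
    (hN : Minimal (fun M : Subgroup G => M.Normal ∧ M ≠ ⊥) N) : IsChiefFactor G ⊥ N := by
  refine ⟨inferInstance, hN.1.1, bot_lt_iff_ne_bot.mpr hN.1.2, fun L hL _ hLN => ?_⟩
  rcases eq_or_ne L ⊥ with hL₀ | hL₀
  · exact Or.inl hL₀
  · exact Or.inr (le_antisymm hLN (hN.2 ⟨hL, hL₀⟩ hLN))

end ChiefFactor

section HallLift

variable {G : Type*} [Group G] {N : Subgroup G} [N.Normal] {π : Set ℕ}

theorem card_comap_mk' (H : Subgroup (G ⧸ N)) :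
    Nat.card (H.comap (QuotientGroup.mk' N)) = Nat.card N * Nat.card H := by
  have hNH : N ≤ H.comap (QuotientGroup.mk' N) := by
    simpa using Subgroup.ker_le_comap (QuotientGroup.mk' N) H
  rw [← Subgroup.relIndex_bot_left, ← Subgroup.relIndex_mul_relIndex _ _ _ bot_le hNH,
    Subgroup.relIndex_bot_left]
  congr 1
  simpa [Subgroup.map_comap_eq_self_of_surjective (QuotientGroup.mk'_surjective N)] using
    Subgroup.relIndex_ker (H.comap (QuotientGroup.mk' N)) (QuotientGroup.mk' N)

theorem IsHall.comap_mk' {H : Subgroup (G ⧸ N)} (hH : IsHall π H)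
    (hN : IsPiNumber π (Nat.card N)) : IsHall π (H.comap (QuotientGroup.mk' N)) := by
  refine ⟨?_, ?_⟩
  · rw [card_comap_mk']
    exact hN.mul hH.1
  · rw [Subgroup.index_comap_of_surjective _ (QuotientGroup.mk'_surjective N)]
    exact hH.2

theorem IsHall.exists_of_isPiNumber_compl [Finite G] {H : Subgroup (G ⧸ N)} (hH : IsHall π H)
    (hN : IsPiNumber πᶜ (Nat.card N)) : ∃ K : Subgroup G, IsHall π K := by
  set L := H.comap (QuotientGroup.mk' N)
  have hNL : N ≤ L := by simpa using Subgroup.ker_le_comap (QuotientGroup.mk' N) H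
  have hcard : Nat.card (N.subgroupOf L) = Nat.card N :=
    Nat.card_congr (Subgroup.subgroupOfEquivOfLe hNL).toEquiv
  have hindex : (N.subgroupOf L).index = Nat.card H := by
    apply Nat.eq_of_mul_eq_mul_left (Nat.card_pos (α := N))
    rw [← card_comap_mk', ← hcard, Subgroup.card_mul_index]
  obtain ⟨K, hK⟩ := Subgroup.exists_right_complement'_of_coprime
    (hcard ▸ hindex ▸ hH.1.coprime_of_compl hN).symm
  refine ⟨K.map L.subtype, ?_, ?_⟩
  · rw [Subgroup.card_map_of_injective L.subtype_injective, ← hK.symm.index_eq_card, hindex]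
    exact hH.1
  · rw [Subgroup.index_map_subtype, hK.index_eq_card, hcard,
      Subgroup.index_comap_of_surjective _ (QuotientGroup.mk'_surjective N)]
    exact hN.mul hH.2

end HallLift

theorem Subgroup.card_quotient_lt {G : Type*} [Group G] [Finite G] (N : Subgroup G) [N.Normal]
    (hN : N ≠ ⊥) : Nat.card (G ⧸ N) < Nat.card G := by
  rw [← Subgroup.index_eq_card, ← N.index_mul_card]
  exact lt_mul_of_one_lt_right (Nat.pos_of_ne_zero Subgroup.index_ne_zero_of_finite)
    (N.one_lt_card_iff_ne_bot.mpr hN)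

universe u

theorem SigmaSoluble.exists_isHall {ι : Type*} {σ : ι → Set ℕ} (hσ : IsPrimePartition σ)
    {G : Type u} [Group G] [Finite G] (hG : SigmaSoluble σ G) (i : ι) :
    ∃ H : Subgroup G, IsHall (σ i) H := by
  induction hn : Nat.card G using Nat.strong_induction_on generalizing G with
  | _ n ih =>
  rcases subsingleton_or_nontrivial G with _ | _
  · exact ⟨⊤, by simpa [IsHall] using ⟨IsPiNumber.one _, IsPiNumber.one _⟩⟩
  obtain ⟨N, hN⟩ := exists_minimal_of_wellFoundedLT (fun M : Subgroup G => M.Normal ∧ M ≠ ⊥)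
    ⟨⊤, inferInstance, top_ne_bot⟩
  have := hN.1.1
  obtain ⟨j, hj⟩ := (sigmaSoluble_iff_relIndex σ).1 hG _ _ (isChiefFactor_bot_of_minimal hN)
  rw [Subgroup.relIndex_bot_left] at hj
  obtain ⟨H, hH⟩ := ih _ (hn ▸ N.card_quotient_lt hN.1.2)
    (hG.of_surjective (QuotientGroup.mk'_surjective N)) rfl
  rcases hσ.isPiNumber_or_isPiNumber_compl hj i with hNi | hNi
  · exact ⟨_, hH.comap_mk' hNi⟩
  · exact hH.exists_of_isPiNumber_compl hNi

/-- Lemma 2.5: if `G` is σ-soluble for a partition `σ` of the primes, then for every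
`i` the group `G` possesses a Hall `σ i`-subgroup: a `σ i`-subgroup whose index is
divisible by no prime in `σ i`. -/
theorem lemma2_5 {ι : Type} (σ : ι → Set ℕ) (hσ : IsPrimePartition σ)
    (G : Type) [Group G] [Finite G] (hsol : SigmaSoluble σ G) :
    ∀ i : ι, ∃ H : Subgroup G, IsPiGroup (σ i) H ∧
      ∀ p : ℕ, p.Prime → p ∣ H.index → p ∉ σ i :=
  hsol.exists_isHall hσ
end
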